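/- Let P be a d-homogeneous multilinear polynomial on ℝ^V. For every t ≥ 0, the occupancy process and the deterministic process started at x(0) satisfy E|P(X(t+1)) − P(x(t+1))| ≤ 2‖P‖₂ + Σ_{d'=1}^{d} E|P^{d',x(t)}(X(t)) − P^{d',x(t)}(x(t))| + 2^d M Σ_{v∈V} c_v(P) · E|X_{N_v}(t) − x_{N_v}(t)|. -/

import Mathlib

open MeasureTheory Finset

noncomputable section

/-- Real value of a Boolean state. -/
def b2r (b : Bool) : ℝ := if b then 1 else 0

/-- Neighborhood average `y_{N_v} = (deg v)⁻¹ ∑_{w ∈ N_v} y_w`. -/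
def nbrAvg {V : Type} [Fintype V] (G : SimpleGraph V) [DecidableRel G.Adj]
    (y : V → ℝ) (v : V) : ℝ :=
  (∑ w ∈ G.neighborFinset v, y w) / (G.degree v : ℝ)

/-- `γ(a,b) = a(1 - f(b)) + (1 - a) g(b)`. -/
def gam (f g : ℝ → ℝ) (a b : ℝ) : ℝ := a * (1 - f b) + (1 - a) * g b

/-- One-step transition measure of the occupancy process: from state `X`, the
coordinates of the next state are independent Bernoulli with success
probability `γ(X_v, X_{N_v})`; this is the corresponding product measure on
`V → Bool`, written out by its mass function. -/
def stepMeasure {V : Type} [Fintype V] [DecidableEq V] (G : SimpleGraph V)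
    [DecidableRel G.Adj] (f g : ℝ → ℝ) (X : V → Bool) : Measure (V → Bool) :=
  ∑ y : V → Bool,
    ENNReal.ofReal (∏ v,
        (if y v then gam f g (b2r (X v)) (nbrAvg G (fun w => b2r (X w)) v)
         else 1 - gam f g (b2r (X v)) (nbrAvg G (fun w => b2r (X w)) v)))
      • Measure.dirac y

/-- Law of the occupancy process at time `t`, started (a.s.) at `x0`. -/
def law {V : Type} [Fintype V] [DecidableEq V] (G : SimpleGraph V)
    [DecidableRel G.Adj] (f g : ℝ → ℝ) (x0 : V → Bool) : ℕ → Measure (V → Bool)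
  | 0 => Measure.dirac x0
  | t + 1 => (law G f g x0 t).bind (stepMeasure G f g)

/-- The deterministic process `x(t+1)_v = γ(x(t)_v, x(t)_{N_v})`. -/
def det {V : Type} [Fintype V] (G : SimpleGraph V) [DecidableRel G.Adj]
    (f g : ℝ → ℝ) (x0 : V → ℝ) : ℕ → V → ℝ
  | 0 => x0
  | t + 1 => fun v => gam f g (det G f g x0 t v) (nbrAvg G (det G f g x0 t) v)

/-- Value of the `d`-homogeneous multilinear polynomial with coefficients
`Q W` (over `d`-element subsets `W` of `V`) at the point `y`. -/
def polyVal {V : Type} [Fintype V] [DecidableEq V] (d : ℕ) (Q : Finset V → ℝ)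
    (y : V → ℝ) : ℝ :=
  ∑ W ∈ Finset.powersetCard d (Finset.univ : Finset V), Q W * ∏ w ∈ W, y w

/-- `c_v(P) = ∑_{W : v ∈ W} |P_W|`. -/
def cCoeff {V : Type} [Fintype V] [DecidableEq V] (d : ℕ) (Q : Finset V → ℝ)
    (v : V) : ℝ :=
  ∑ W ∈ (Finset.powersetCard d (Finset.univ : Finset V)).filter (fun W => v ∈ W), |Q W|

/-- `‖P‖₁ = ∑_v c_v(P)`. -/
def polyNorm1 {V : Type} [Fintype V] [DecidableEq V] (d : ℕ) (Q : Finset V → ℝ) : ℝ :=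
  ∑ v, cCoeff d Q v

/-- `‖P‖₂ = (∑_v c_v(P)²)^{1/2}`. -/
def polyNorm2 {V : Type} [Fintype V] [DecidableEq V] (d : ℕ) (Q : Finset V → ℝ) : ℝ :=
  Real.sqrt (∑ v, cCoeff d Q v ^ 2)

/-- `φ_{W,U}(x) = ∏_{w∈U}(1 − f(x_{N_w}) − g(x_{N_w})) · ∏_{w∈W∖U} g(x_{N_w})`. -/
def phiWU {V : Type} [Fintype V] [DecidableEq V] (G : SimpleGraph V) [DecidableRel G.Adj]
    (f g : ℝ → ℝ) (x : V → ℝ) (W U : Finset V) : ℝ :=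
  (∏ w ∈ U, (1 - f (nbrAvg G x w) - g (nbrAvg G x w))) * ∏ w ∈ W \ U, g (nbrAvg G x w)

/-- Coefficients of the `d'`-homogeneous polynomial `P^{d',x}`:
`P^{d',x}_U = ∑_{W : U ⊆ W, |W| = d} P_W φ_{W,U}(x)`. -/
def derivedCoeff {V : Type} [Fintype V] [DecidableEq V] (G : SimpleGraph V)
    [DecidableRel G.Adj] (f g : ℝ → ℝ) (d : ℕ) (Q : Finset V → ℝ) (x : V → ℝ)
    (U : Finset V) : ℝ :=
  ∑ W ∈ (Finset.powersetCard d (Finset.univ : Finset V)).filter (fun W => U ⊆ W),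
    Q W * phiWU G f g x W U

/-!
Condition on `X(t) = X`. The coordinates of `X(t+1)` are then independent Bernoulli variables with
means `p_v = γ(X_v, X_{N_v})`, and only monomials sharing a vertex are correlated, so the variance
of `P(X(t+1))` is at most `∑_v c_v(P)²` and, by Cauchy–Schwarz, `E|P(X(t+1)) - P(p)| ≤ ‖P‖₂`.
The deterministic error `P(p) - P(x(t+1))` is split at `B_v = γ(X_v, x_{N_v})`. As `γ` is
`M`-Lipschitz in its second argument and products of numbers in `[0,1]` are 1-Lipschitz for the
`ℓ¹` distance, `|P(p) - P(B)| ≤ M ∑_v c_v(P) |X_{N_v} - x_{N_v}|`. As `γ` is affine in its first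
argument, expanding `∏_{w ∈ W} γ(·_w, x_{N_w})` over the subsets `U ⊆ W` writes `P(B) - P(x(t+1))`
exactly as `∑_{d' ≥ 1} (P^{d',x}(X) - P^{d',x}(x))`.
-/

namespace OccupancyProcess

section Products

variable {ι : Type*}

lemma b2r_mem_Icc (b : Bool) : b2r b ∈ Set.Icc (0 : ℝ) 1 := by
  cases b <;> simp [b2r]

lemma prod_mem_Icc {s : Finset ι} {p : ι → ℝ} (hp : ∀ i ∈ s, p i ∈ Set.Icc (0 : ℝ) 1) :
    ∏ i ∈ s, p i ∈ Set.Icc (0 : ℝ) 1 :=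
  ⟨prod_nonneg fun i hi => (hp i hi).1,
    prod_le_one (fun i hi => (hp i hi).1) fun i hi => (hp i hi).2⟩

lemma prod_b2r (y : ι → Bool) (s : Finset ι) :
    ∏ i ∈ s, b2r (y i) = if ∀ i ∈ s, y i = true then 1 else 0 := by
  simp only [b2r]
  exact prod_boole

variable [DecidableEq ι]

lemma prod_b2r_mul_prod_b2r (y : ι → Bool) (s t : Finset ι) :
    (∏ i ∈ s, b2r (y i)) * ∏ i ∈ t, b2r (y i) = ∏ i ∈ s ∪ t, b2r (y i) := by
  simp only [prod_b2r, forall_mem_union, ite_zero_mul_ite_zero, one_mul]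

lemma abs_prod_union_sub_prod_mul_prod_le {p : ι → ℝ} (hp : ∀ i, p i ∈ Set.Icc (0 : ℝ) 1)
    (s t : Finset ι) : |∏ i ∈ s ∪ t, p i - (∏ i ∈ s, p i) * ∏ i ∈ t, p i| ≤ #(s ∩ t) := by
  rcases (s ∩ t).eq_empty_or_nonempty with hst | hst
  · rw [prod_union (disjoint_iff_inter_eq_empty.mpr hst), sub_self, abs_zero, hst]
    simp
  · have h₁ := prod_mem_Icc (s := s ∪ t) fun i _ => hp i
    have h₂ := prod_mem_Icc (s := s) fun i _ => hp i
    have h₃ := prod_mem_Icc (s := t) fun i _ => hp i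
    calc |∏ i ∈ s ∪ t, p i - (∏ i ∈ s, p i) * ∏ i ∈ t, p i| ≤ 1 := by
          rw [abs_le]; constructor <;> nlinarith [h₁.1, h₁.2, h₂.1, h₂.2, h₃.1, h₃.2]
      _ ≤ #(s ∩ t) := by exact_mod_cast hst.card_pos

lemma abs_prod_sub_prod_le {a b : ι → ℝ} {s : Finset ι}
    (ha : ∀ i ∈ s, a i ∈ Set.Icc (0 : ℝ) 1) (hb : ∀ i ∈ s, b i ∈ Set.Icc (0 : ℝ) 1) :
    |∏ i ∈ s, a i - ∏ i ∈ s, b i| ≤ ∑ i ∈ s, |a i - b i| := by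
  induction s using Finset.induction_on with
  | empty => simp
  | @insert i s hi ih =>
    simp only [forall_mem_insert] at ha hb
    rw [prod_insert hi, prod_insert hi, sum_insert hi]
    have ha' : |a i| ≤ 1 := abs_le.mpr ⟨by linarith [ha.1.1], ha.1.2⟩
    have hb' : |∏ j ∈ s, b j| ≤ 1 := by
      have := prod_mem_Icc hb.2
      exact abs_le.mpr ⟨by linarith [this.1], this.2⟩
    calc |a i * ∏ j ∈ s, a j - b i * ∏ j ∈ s, b j|
        = |a i * (∏ j ∈ s, a j - ∏ j ∈ s, b j) + (a i - b i) * ∏ j ∈ s, b j| := by ring_nf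
      _ ≤ |a i| * |∏ j ∈ s, a j - ∏ j ∈ s, b j| + |a i - b i| * |∏ j ∈ s, b j| := by
        rw [← abs_mul, ← abs_mul]; exact abs_add_le _ _
      _ ≤ 1 * ∑ j ∈ s, |a j - b j| + |a i - b i| * 1 := by
        gcongr
        exact ih ha.2 hb.2
      _ = |a i - b i| + ∑ j ∈ s, |a j - b j| := by ring

end Products

section BernoulliProduct

variable {V : Type} [Fintype V]

def bernoulliWeight (p : V → ℝ) (y : V → Bool) : ℝ := ∏ v, if y v then p v else 1 - p v

lemma bernoulliWeight_nonneg {p : V → ℝ} (hp : ∀ v, p v ∈ Set.Icc (0 : ℝ) 1) (y : V → Bool) :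
    0 ≤ bernoulliWeight p y :=
  prod_nonneg fun v _ => by split <;> linarith [(hp v).1, (hp v).2]

variable [DecidableEq V]

lemma sum_bernoulliWeight_mul_prod (p : V → ℝ) (s : Finset V) :
    ∑ y, bernoulliWeight p y * ∏ v ∈ s, b2r (y v) = ∏ v ∈ s, p v := by
  let h : V → Bool → ℝ := fun v b => (if b then p v else 1 - p v) * if v ∈ s then b2r b else 1
  have hfactor : ∀ y : V → Bool, bernoulliWeight p y * ∏ v ∈ s, b2r (y v) = ∏ v, h v (y v) :=
    fun y => by rw [prod_mul_distrib, prod_ite_mem, univ_inter, bernoulliWeight]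
  have hcoord : ∀ v, ∑ b, h v b = if v ∈ s then p v else 1 := fun v => by
    by_cases hv : v ∈ s <;> simp [h, hv, b2r]
  simp_rw [hfactor, ← Fintype.prod_sum h, hcoord, prod_ite_mem, univ_inter]

lemma sum_bernoulliWeight (p : V → ℝ) : ∑ y, bernoulliWeight p y = 1 := by
  simpa using sum_bernoulliWeight_mul_prod p ∅

lemma sum_bernoulliWeight_mul_polyVal (p : V → ℝ) (d : ℕ) (Q : Finset V → ℝ) :
    ∑ y, bernoulliWeight p y * polyVal d Q (fun w => b2r (y w)) = polyVal d Q p := by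
  simp_rw [polyVal, mul_sum, mul_left_comm (bernoulliWeight p _)]
  rw [sum_comm]
  simp_rw [← mul_sum, sum_bernoulliWeight_mul_prod]

lemma sum_bernoulliWeight_mul_polyVal_sq (p : V → ℝ) (d : ℕ) (Q : Finset V → ℝ) :
    ∑ y, bernoulliWeight p y * polyVal d Q (fun w => b2r (y w)) ^ 2
      = ∑ W ∈ powersetCard d univ, ∑ W' ∈ powersetCard d univ, Q W * Q W' * ∏ v ∈ W ∪ W', p v := by
  have hsq : ∀ y : V → Bool, polyVal d Q (fun w => b2r (y w)) ^ 2
      = ∑ W ∈ powersetCard d univ, ∑ W' ∈ powersetCard d univ,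
          Q W * Q W' * ∏ v ∈ W ∪ W', b2r (y v) := fun y => by
    simp_rw [sq, polyVal, sum_mul_sum, ← prod_b2r_mul_prod_b2r, mul_mul_mul_comm]
  simp_rw [hsq, mul_sum, mul_left_comm (bernoulliWeight p _)]
  rw [sum_comm]
  refine sum_congr rfl fun W _ => ?_
  rw [sum_comm]
  simp_rw [← mul_sum, sum_bernoulliWeight_mul_prod]

lemma sum_cCoeff_sq (d : ℕ) (Q : Finset V → ℝ) :
    ∑ v, cCoeff d Q v ^ 2
      = ∑ W ∈ powersetCard d univ, ∑ W' ∈ powersetCard d univ, |Q W| * |Q W'| * #(W ∩ W') := by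
  have hc : ∀ v, cCoeff d Q v = ∑ W ∈ powersetCard d univ, if v ∈ W then |Q W| else 0 :=
    fun v => sum_filter _ _
  simp_rw [hc, sq, sum_mul_sum, ite_zero_mul_ite_zero]
  rw [sum_comm]
  refine sum_congr rfl fun W _ => ?_
  rw [sum_comm]
  refine sum_congr rfl fun W' _ => ?_
  rw [← sum_filter, sum_const, nsmul_eq_mul, mul_comm]
  congr 3
  ext v
  simp

lemma sum_bernoulliWeight_mul_sq_sub_polyVal_le {p : V → ℝ}
    (hp : ∀ v, p v ∈ Set.Icc (0 : ℝ) 1) (d : ℕ) (Q : Finset V → ℝ) :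
    ∑ y, bernoulliWeight p y * (polyVal d Q (fun w => b2r (y w)) - polyVal d Q p) ^ 2
      ≤ ∑ v, cCoeff d Q v ^ 2 := by
  set m := polyVal d Q p
  have hm : m ^ 2 = ∑ W ∈ powersetCard d univ, ∑ W' ∈ powersetCard d univ,
      Q W * Q W' * ((∏ v ∈ W, p v) * ∏ v ∈ W', p v) := by
    simp_rw [m, sq, polyVal, sum_mul_sum, mul_mul_mul_comm]
  have hexpand : ∑ y, bernoulliWeight p y * (polyVal d Q (fun w => b2r (y w)) - m) ^ 2
      = ∑ W ∈ powersetCard d univ, ∑ W' ∈ powersetCard d univ,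
          Q W * Q W' * (∏ v ∈ W ∪ W', p v - (∏ v ∈ W, p v) * ∏ v ∈ W', p v) :=
    calc ∑ y, bernoulliWeight p y * (polyVal d Q (fun w => b2r (y w)) - m) ^ 2
        = ∑ y, bernoulliWeight p y * polyVal d Q (fun w => b2r (y w)) ^ 2
            - 2 * m * ∑ y, bernoulliWeight p y * polyVal d Q (fun w => b2r (y w))
            + m ^ 2 * ∑ y, bernoulliWeight p y := by
          rw [mul_sum, mul_sum, ← sum_sub_distrib, ← sum_add_distrib]
          exact sum_congr rfl fun y _ => by ring
      _ = ∑ y, bernoulliWeight p y * polyVal d Q (fun w => b2r (y w)) ^ 2 - m ^ 2 := by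
          rw [sum_bernoulliWeight_mul_polyVal, sum_bernoulliWeight]; ring
      _ = _ := by
          simp_rw [sum_bernoulliWeight_mul_polyVal_sq, hm, ← sum_sub_distrib, mul_sub]
  rw [hexpand, sum_cCoeff_sq]
  refine sum_le_sum fun W _ => sum_le_sum fun W' _ => ?_
  calc Q W * Q W' * (∏ v ∈ W ∪ W', p v - (∏ v ∈ W, p v) * ∏ v ∈ W', p v)
      ≤ |Q W * Q W' * (∏ v ∈ W ∪ W', p v - (∏ v ∈ W, p v) * ∏ v ∈ W', p v)| := le_abs_self _
    _ ≤ |Q W| * |Q W'| * #(W ∩ W') := by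
      rw [abs_mul, abs_mul]
      gcongr
      exact abs_prod_union_sub_prod_mul_prod_le hp W W'

lemma sum_bernoulliWeight_mul_abs_sub_polyVal_le {p : V → ℝ}
    (hp : ∀ v, p v ∈ Set.Icc (0 : ℝ) 1) (d : ℕ) (Q : Finset V → ℝ) :
    ∑ y, bernoulliWeight p y * |polyVal d Q (fun w => b2r (y w)) - polyVal d Q p|
      ≤ polyNorm2 d Q := by
  refine Real.le_sqrt_of_sq_le ?_
  calc (∑ y, bernoulliWeight p y * |polyVal d Q (fun w => b2r (y w)) - polyVal d Q p|) ^ 2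
      ≤ (∑ y, bernoulliWeight p y)
          * ∑ y, bernoulliWeight p y * (polyVal d Q (fun w => b2r (y w)) - polyVal d Q p) ^ 2 :=
        sum_sq_le_sum_mul_sum_of_sq_le_mul _ (fun y _ => bernoulliWeight_nonneg hp y)
          (fun y _ => mul_nonneg (bernoulliWeight_nonneg hp y) (sq_nonneg _))
          fun y _ => le_of_eq (by rw [mul_pow, sq_abs]; ring)
    _ ≤ ∑ v, cCoeff d Q v ^ 2 := by
        rw [sum_bernoulliWeight, one_mul]
        exact sum_bernoulliWeight_mul_sq_sub_polyVal_le hp d Q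

end BernoulliProduct

section Polynomials

variable {V : Type} [Fintype V] [DecidableEq V]

lemma sum_abs_mul_sum_eq_sum_cCoeff_mul (d : ℕ) (Q : Finset V → ℝ) (e : V → ℝ) :
    ∑ W ∈ powersetCard d univ, |Q W| * ∑ w ∈ W, e w = ∑ v, cCoeff d Q v * e v := by
  simp_rw [cCoeff, sum_mul, sum_filter, mul_sum]
  rw [sum_comm]
  simp_rw [sum_ite_mem, univ_inter]

lemma abs_polyVal_sub_polyVal_le {a b : V → ℝ} (ha : ∀ v, a v ∈ Set.Icc (0 : ℝ) 1)
    (hb : ∀ v, b v ∈ Set.Icc (0 : ℝ) 1) (d : ℕ) (Q : Finset V → ℝ) :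
    |polyVal d Q a - polyVal d Q b| ≤ ∑ v, cCoeff d Q v * |a v - b v| := by
  calc |polyVal d Q a - polyVal d Q b|
      = |∑ W ∈ powersetCard d univ, Q W * (∏ w ∈ W, a w - ∏ w ∈ W, b w)| := by
        simp_rw [polyVal, ← sum_sub_distrib, mul_sub]
    _ ≤ ∑ W ∈ powersetCard d univ, |Q W| * ∑ w ∈ W, |a w - b w| := by
        refine (abs_sum_le_sum_abs _ _).trans (sum_le_sum fun W _ => ?_)
        rw [abs_mul]
        gcongr
        exact abs_prod_sub_prod_le (fun v _ => ha v) fun v _ => hb v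
    _ = ∑ v, cCoeff d Q v * |a v - b v| := sum_abs_mul_sum_eq_sum_cCoeff_mul d Q _

variable (G : SimpleGraph V) [DecidableRel G.Adj] (f g : ℝ → ℝ)

lemma prod_gam_eq_sum_powerset (x r : V → ℝ) (W : Finset V) :
    ∏ w ∈ W, gam f g (r w) (nbrAvg G x w) = ∑ U ∈ W.powerset, phiWU G f g x W U * ∏ w ∈ U, r w := by
  have hgam : ∀ w, gam f g (r w) (nbrAvg G x w)
      = r w * (1 - f (nbrAvg G x w) - g (nbrAvg G x w)) + g (nbrAvg G x w) := fun w => by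
    simp only [gam]; ring
  simp_rw [hgam, prod_add, prod_mul_distrib, phiWU]
  exact sum_congr rfl fun U _ => by ring

lemma polyVal_gam_eq_sum_polyVal_derivedCoeff (d : ℕ) (Q : Finset V → ℝ) (x r : V → ℝ) :
    polyVal d Q (fun w => gam f g (r w) (nbrAvg G x w))
      = ∑ d' ∈ range (d + 1), polyVal d' (derivedCoeff G f g d Q x) r := by
  simp_rw [polyVal, derivedCoeff, prod_gam_eq_sum_powerset, mul_sum, sum_mul,
    mul_assoc, powersetCard_eq_filter (s := univ), powerset_univ]
  rw [sum_fiberwise_eq_sum_filter]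
  -- both sides sum `Q W * φ_{W,U}(x) * ∏_{w ∈ U} r w` over the pairs `U ⊆ W` with `#W = d`
  apply sum_comm'
  intro W U
  simp only [mem_filter, mem_univ, true_and, mem_powerset, mem_range]
  exact ⟨fun h => ⟨h, Nat.lt_succ_of_le (h.1 ▸ card_le_card h.2)⟩, And.left⟩

lemma polyVal_gam_sub_polyVal_gam (d : ℕ) (Q : Finset V → ℝ) (x r : V → ℝ) :
    polyVal d Q (fun w => gam f g (r w) (nbrAvg G x w))
        - polyVal d Q (fun w => gam f g (x w) (nbrAvg G x w))
      = ∑ d' ∈ Icc 1 d, (polyVal d' (derivedCoeff G f g d Q x) r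
          - polyVal d' (derivedCoeff G f g d Q x) x) := by
  have hconst : polyVal 0 (derivedCoeff G f g d Q x) r
      = polyVal 0 (derivedCoeff G f g d Q x) x := by
    simp [polyVal]
  rw [polyVal_gam_eq_sum_polyVal_derivedCoeff, polyVal_gam_eq_sum_polyVal_derivedCoeff,
    ← sum_sub_distrib, sum_range_succ', hconst, sub_self, add_zero, ← Ico_add_one_right_eq_Icc,
    sum_Ico_eq_sum_range]
  simp only [add_tsub_cancel_right, add_comm 1]

end Polynomials

section Gam

variable {f g : ℝ → ℝ}

lemma gam_mem_Icc (hf : Set.MapsTo f (Set.Icc 0 1) (Set.Icc 0 1))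
    (hg : Set.MapsTo g (Set.Icc 0 1) (Set.Icc 0 1)) {a b : ℝ} (ha : a ∈ Set.Icc (0 : ℝ) 1)
    (hb : b ∈ Set.Icc (0 : ℝ) 1) : gam f g a b ∈ Set.Icc (0 : ℝ) 1 := by
  obtain ⟨hf0, hf1⟩ := hf hb
  obtain ⟨hg0, hg1⟩ := hg hb
  obtain ⟨ha0, ha1⟩ := ha
  constructor <;> simp only [gam] <;> nlinarith

lemma abs_gam_sub_gam_le {M : ℝ}
    (hf : ∀ a ∈ Set.Icc (0 : ℝ) 1, ∀ b ∈ Set.Icc (0 : ℝ) 1, |f a - f b| ≤ M * |a - b|)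
    (hg : ∀ a ∈ Set.Icc (0 : ℝ) 1, ∀ b ∈ Set.Icc (0 : ℝ) 1, |g a - g b| ≤ M * |a - b|)
    {a b b' : ℝ} (ha : a ∈ Set.Icc (0 : ℝ) 1) (hb : b ∈ Set.Icc (0 : ℝ) 1)
    (hb' : b' ∈ Set.Icc (0 : ℝ) 1) :
    |gam f g a b - gam f g a b'| ≤ M * |b - b'| := by
  have h1 : 0 ≤ 1 - a := sub_nonneg.mpr ha.2
  have hf' : |f b' - f b| ≤ M * |b - b'| := by rw [abs_sub_comm b]; exact hf b' hb' b hb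
  calc |gam f g a b - gam f g a b'| = |a * (f b' - f b) + (1 - a) * (g b - g b')| := by
        simp only [gam]; ring_nf
    _ ≤ a * |f b' - f b| + (1 - a) * |g b - g b'| := by
        refine (abs_add_le _ _).trans_eq ?_
        rw [abs_mul, abs_mul, abs_of_nonneg ha.1, abs_of_nonneg h1]
    _ ≤ a * (M * |b - b'|) + (1 - a) * (M * |b - b'|) :=
        add_le_add (mul_le_mul_of_nonneg_left hf' ha.1)
          (mul_le_mul_of_nonneg_left (hg b hb b' hb') h1)
    _ = M * |b - b'| := by ring

end Gam

section Dynamics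

variable {V : Type} [Fintype V] {G : SimpleGraph V} [DecidableRel G.Adj] {f g : ℝ → ℝ}

variable (G) in
lemma nbrAvg_mem_Icc {y : V → ℝ} (hy : ∀ v, y v ∈ Set.Icc (0 : ℝ) 1) (v : V) :
    nbrAvg G y v ∈ Set.Icc (0 : ℝ) 1 := by
  have hsum : ∑ w ∈ G.neighborFinset v, y w ≤ G.degree v :=
    calc ∑ w ∈ G.neighborFinset v, y w ≤ ∑ w ∈ G.neighborFinset v, (1 : ℝ) :=
          sum_le_sum fun w _ => (hy w).2
      _ = G.degree v := by simp
  exact ⟨div_nonneg (sum_nonneg fun w _ => (hy w).1) (Nat.cast_nonneg _),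
    div_le_one_of_le₀ hsum (Nat.cast_nonneg _)⟩

lemma det_mem_Icc (hf : Set.MapsTo f (Set.Icc 0 1) (Set.Icc 0 1))
    (hg : Set.MapsTo g (Set.Icc 0 1) (Set.Icc 0 1)) {x0 : V → ℝ}
    (hx0 : ∀ v, x0 v ∈ Set.Icc (0 : ℝ) 1) (t : ℕ) (v : V) :
    det G f g x0 t v ∈ Set.Icc (0 : ℝ) 1 := by
  induction t generalizing v with
  | zero => exact hx0 v
  | succ t ih => exact gam_mem_Icc hf hg (ih v) (nbrAvg_mem_Icc G ih v)

variable (G f g) in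
def transitionProb (X : V → Bool) (v : V) : ℝ :=
  gam f g (b2r (X v)) (nbrAvg G (fun w => b2r (X w)) v)

lemma transitionProb_mem_Icc (hf : Set.MapsTo f (Set.Icc 0 1) (Set.Icc 0 1))
    (hg : Set.MapsTo g (Set.Icc 0 1) (Set.Icc 0 1)) (X : V → Bool) (v : V) :
    transitionProb G f g X v ∈ Set.Icc (0 : ℝ) 1 :=
  gam_mem_Icc hf hg (b2r_mem_Icc _) (nbrAvg_mem_Icc G (fun _ => b2r_mem_Icc _) v)

lemma sum_bernoulliWeight_transitionProb_mul_abs_polyVal_sub_le [DecidableEq V] {M : ℝ}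
    (hf : Set.MapsTo f (Set.Icc 0 1) (Set.Icc 0 1)) (hg : Set.MapsTo g (Set.Icc 0 1) (Set.Icc 0 1))
    (hfLip : ∀ a ∈ Set.Icc (0 : ℝ) 1, ∀ b ∈ Set.Icc (0 : ℝ) 1, |f a - f b| ≤ M * |a - b|)
    (hgLip : ∀ a ∈ Set.Icc (0 : ℝ) 1, ∀ b ∈ Set.Icc (0 : ℝ) 1, |g a - g b| ≤ M * |a - b|)
    (d : ℕ) (Q : Finset V → ℝ) {x : V → ℝ} (hx : ∀ v, x v ∈ Set.Icc (0 : ℝ) 1) (X : V → Bool) :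
    ∑ y, bernoulliWeight (transitionProb G f g X) y
        * |polyVal d Q (fun w => b2r (y w)) - polyVal d Q (fun v => gam f g (x v) (nbrAvg G x v))|
      ≤ polyNorm2 d Q
        + ∑ d' ∈ Icc 1 d, |polyVal d' (derivedCoeff G f g d Q x) (fun w => b2r (X w))
            - polyVal d' (derivedCoeff G f g d Q x) x|
        + M * ∑ v, cCoeff d Q v * |nbrAvg G (fun w => b2r (X w)) v - nbrAvg G x v| := by
  set p := transitionProb G f g X
  have hp : ∀ v, p v ∈ Set.Icc (0 : ℝ) 1 := transitionProb_mem_Icc hf hg X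
  set B : V → ℝ := fun v => gam f g (b2r (X v)) (nbrAvg G x v)
  have hB : ∀ v, B v ∈ Set.Icc (0 : ℝ) 1 :=
    fun v => gam_mem_Icc hf hg (b2r_mem_Icc _) (nbrAvg_mem_Icc G hx v)
  have hnbr : |polyVal d Q p - polyVal d Q B|
      ≤ M * ∑ v, cCoeff d Q v * |nbrAvg G (fun w => b2r (X w)) v - nbrAvg G x v| := by
    refine (abs_polyVal_sub_polyVal_le hp hB d Q).trans ?_
    rw [mul_sum]
    refine sum_le_sum fun v _ => ?_
    rw [mul_left_comm]
    exact mul_le_mul_of_nonneg_left (abs_gam_sub_gam_le hfLip hgLip (b2r_mem_Icc _)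
      (nbrAvg_mem_Icc G (fun _ => b2r_mem_Icc _) v) (nbrAvg_mem_Icc G hx v))
      (sum_nonneg fun _ _ => abs_nonneg _)
  have hown : |polyVal d Q B - polyVal d Q (fun v => gam f g (x v) (nbrAvg G x v))|
      ≤ ∑ d' ∈ Icc 1 d, |polyVal d' (derivedCoeff G f g d Q x) (fun w => b2r (X w))
          - polyVal d' (derivedCoeff G f g d Q x) x| := by
    rw [polyVal_gam_sub_polyVal_gam]
    exact abs_sum_le_sum_abs _ _
  calc ∑ y, bernoulliWeight p y
        * |polyVal d Q (fun w => b2r (y w)) - polyVal d Q (fun v => gam f g (x v) (nbrAvg G x v))|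
      ≤ ∑ y, bernoulliWeight p y * (|polyVal d Q (fun w => b2r (y w)) - polyVal d Q p|
          + |polyVal d Q p - polyVal d Q (fun v => gam f g (x v) (nbrAvg G x v))|) :=
        sum_le_sum fun y _ =>
          mul_le_mul_of_nonneg_left (abs_sub_le _ _ _) (bernoulliWeight_nonneg hp y)
    _ = ∑ y, bernoulliWeight p y * |polyVal d Q (fun w => b2r (y w)) - polyVal d Q p|
          + |polyVal d Q p - polyVal d Q (fun v => gam f g (x v) (nbrAvg G x v))| := by
        simp_rw [mul_add, sum_add_distrib, ← sum_mul, sum_bernoulliWeight, one_mul]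
    _ ≤ _ := by
        have hconc := sum_bernoulliWeight_mul_abs_sub_polyVal_le hp d Q
        have hsplit := abs_sub_le (polyVal d Q p) (polyVal d Q B)
          (polyVal d Q fun v => gam f g (x v) (nbrAvg G x v))
        linarith

end Dynamics

section FiniteMeasure

variable {α : Type*} [Fintype α] [MeasurableSpace α]

lemma isProbabilityMeasure_sum_smul_dirac {c : α → ℝ} (hc : ∀ a, 0 ≤ c a) (h1 : ∑ a, c a = 1) :
    IsProbabilityMeasure (∑ b, ENNReal.ofReal (c b) • Measure.dirac b) := by
  constructor
  simp [← ENNReal.ofReal_sum_of_nonneg fun a _ => hc a, h1]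

variable [MeasurableSingletonClass α]

lemma integral_sum_smul_dirac {c : α → ℝ} (hc : ∀ a, 0 ≤ c a) (F : α → ℝ) :
    ∫ a, F a ∂(∑ b, ENNReal.ofReal (c b) • Measure.dirac b) = ∑ b, c b * F b := by
  rw [integral_finsetSum_measure fun b _ => Integrable.of_finite.smul_measure ENNReal.ofReal_ne_top]
  refine sum_congr rfl fun b _ => ?_
  rw [integral_smul_measure, integral_dirac, ENNReal.toReal_ofReal (hc b), smul_eq_mul]

lemma integral_bind_eq_integral_integral {β : Type*} [Fintype β] [MeasurableSpace β]
    [DiscreteMeasurableSpace β] {μ : Measure β} [IsProbabilityMeasure μ] {κ : β → Measure α}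
    (hκ : ∀ b, IsProbabilityMeasure (κ b)) (F : α → ℝ) :
    ∫ a, F a ∂(μ.bind κ) = ∫ b, ∫ a, F a ∂(κ b) ∂μ := by
  have hmeas : AEMeasurable κ μ := Measurable.of_discrete.aemeasurable
  have := isProbabilityMeasure_bind hmeas (ae_of_all _ hκ)
  have hsingleton : ∀ a, (μ.bind κ).real {a} = ∑ b, μ.real {b} * (κ b).real {a} := fun a => by
    rw [measureReal_def, Measure.bind_apply (measurableSet_singleton a) hmeas, lintegral_fintype,
      ENNReal.toReal_sum fun b _ => ENNReal.mul_ne_top (measure_ne_top _ _) (measure_ne_top _ _)]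
    simp [measureReal_def, ENNReal.toReal_mul, mul_comm]
  have hinner : ∀ b, ∫ a, F a ∂(κ b) = ∑ a, (κ b).real {a} • F a :=
    fun b => integral_fintype Integrable.of_finite
  rw [integral_fintype Integrable.of_finite, integral_fintype Integrable.of_finite]
  simp_rw [hinner, hsingleton, smul_eq_mul, sum_mul, mul_sum, mul_assoc]
  exact sum_comm

end FiniteMeasure

section Law

variable {V : Type} [Fintype V] [DecidableEq V] {G : SimpleGraph V} [DecidableRel G.Adj]
  {f g : ℝ → ℝ}

lemma integral_stepMeasure (hf : Set.MapsTo f (Set.Icc 0 1) (Set.Icc 0 1))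
    (hg : Set.MapsTo g (Set.Icc 0 1) (Set.Icc 0 1)) (X : V → Bool) (F : (V → Bool) → ℝ) :
    ∫ y, F y ∂(stepMeasure G f g X) = ∑ y, bernoulliWeight (transitionProb G f g X) y * F y :=
  integral_sum_smul_dirac (bernoulliWeight_nonneg (transitionProb_mem_Icc hf hg X)) F

lemma isProbabilityMeasure_stepMeasure (hf : Set.MapsTo f (Set.Icc 0 1) (Set.Icc 0 1))
    (hg : Set.MapsTo g (Set.Icc 0 1) (Set.Icc 0 1)) (X : V → Bool) :
    IsProbabilityMeasure (stepMeasure G f g X) :=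
  isProbabilityMeasure_sum_smul_dirac (bernoulliWeight_nonneg (transitionProb_mem_Icc hf hg X))
    (sum_bernoulliWeight _)

lemma isProbabilityMeasure_law (hf : Set.MapsTo f (Set.Icc 0 1) (Set.Icc 0 1))
    (hg : Set.MapsTo g (Set.Icc 0 1) (Set.Icc 0 1)) (x0 : V → Bool) (t : ℕ) :
    IsProbabilityMeasure (law G f g x0 t) := by
  induction t with
  | zero => exact Measure.dirac.isProbabilityMeasure
  | succ t ih =>
    exact isProbabilityMeasure_bind Measurable.of_discrete.aemeasurable
      (ae_of_all _ (isProbabilityMeasure_stepMeasure (G := G) hf hg))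

lemma integral_law_succ (hf : Set.MapsTo f (Set.Icc 0 1) (Set.Icc 0 1))
    (hg : Set.MapsTo g (Set.Icc 0 1) (Set.Icc 0 1)) (x0 : V → Bool) (t : ℕ) (F : (V → Bool) → ℝ) :
    ∫ y, F y ∂(law G f g x0 (t + 1))
      = ∫ X, ∑ y, bernoulliWeight (transitionProb G f g X) y * F y ∂(law G f g x0 t) := by
  have := isProbabilityMeasure_law (G := G) hf hg x0 t
  rw [law, integral_bind_eq_integral_integral (isProbabilityMeasure_stepMeasure hf hg)]
  simp_rw [integral_stepMeasure hf hg]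

end Law

end OccupancyProcess

open OccupancyProcess

theorem polynomial_one_step_bound_general
    {V : Type} [Fintype V] [DecidableEq V]
    (G : SimpleGraph V) [DecidableRel G.Adj]
    (f g : ℝ → ℝ) (M : ℝ)
    (hf01 : ∀ a ∈ Set.Icc (0:ℝ) 1, f a ∈ Set.Icc (0:ℝ) 1)
    (hg01 : ∀ a ∈ Set.Icc (0:ℝ) 1, g a ∈ Set.Icc (0:ℝ) 1)
    (hfLip : ∀ a ∈ Set.Icc (0:ℝ) 1, ∀ b ∈ Set.Icc (0:ℝ) 1, |f a - f b| ≤ M * |a - b|)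
    (hgLip : ∀ a ∈ Set.Icc (0:ℝ) 1, ∀ b ∈ Set.Icc (0:ℝ) 1, |g a - g b| ≤ M * |a - b|)
    (x0 : V → Bool) (d : ℕ) (Q : Finset V → ℝ) (t : ℕ) :
    ∫ y, |polyVal d Q (fun w => b2r (y w))
          - polyVal d Q (det G f g (fun w => b2r (x0 w)) (t + 1))| ∂ (law G f g x0 (t + 1))
      ≤ 2 * polyNorm2 d Q
        + (∑ d' ∈ Finset.Icc 1 d,
            ∫ y, |polyVal d' (derivedCoeff G f g d Q (det G f g (fun w => b2r (x0 w)) t))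
                    (fun w => b2r (y w))
                  - polyVal d' (derivedCoeff G f g d Q (det G f g (fun w => b2r (x0 w)) t))
                    (det G f g (fun w => b2r (x0 w)) t)| ∂ (law G f g x0 t))
        + 2 ^ d * M * ∑ v, cCoeff d Q v *
            ∫ y, |nbrAvg G (fun w => b2r (y w)) v
                  - nbrAvg G (det G f g (fun w => b2r (x0 w)) t) v| ∂ (law G f g x0 t) := by
  set x := det G f g (fun w => b2r (x0 w)) t
  have hx : ∀ v, x v ∈ Set.Icc (0 : ℝ) 1 := det_mem_Icc hf01 hg01 (fun v => b2r_mem_Icc (x0 v)) t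
  have hM : 0 ≤ M := (abs_nonneg _).trans (by simpa using hfLip 0 (by simp) 1 (by simp))
  have := isProbabilityMeasure_law (G := G) hf01 hg01 x0 t
  calc _ = ∫ X, ∑ y, bernoulliWeight (transitionProb G f g X) y
          * |polyVal d Q (fun w => b2r (y w)) - polyVal d Q (fun v => gam f g (x v) (nbrAvg G x v))|
          ∂(law G f g x0 t) := integral_law_succ hf01 hg01 x0 t _
    _ ≤ ∫ X, (polyNorm2 d Q
          + ∑ d' ∈ Icc 1 d, |polyVal d' (derivedCoeff G f g d Q x) (fun w => b2r (X w))
              - polyVal d' (derivedCoeff G f g d Q x) x|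
          + M * ∑ v, cCoeff d Q v * |nbrAvg G (fun w => b2r (X w)) v - nbrAvg G x v|)
          ∂(law G f g x0 t) :=
        integral_mono Integrable.of_finite Integrable.of_finite fun X =>
          sum_bernoulliWeight_transitionProb_mul_abs_polyVal_sub_le hf01 hg01 hfLip hgLip d Q hx X
    _ = polyNorm2 d Q
          + ∑ d' ∈ Icc 1 d, ∫ X, |polyVal d' (derivedCoeff G f g d Q x) (fun w => b2r (X w))
              - polyVal d' (derivedCoeff G f g d Q x) x| ∂(law G f g x0 t)
          + M * ∑ v, cCoeff d Q v
              * ∫ X, |nbrAvg G (fun w => b2r (X w)) v - nbrAvg G x v| ∂(law G f g x0 t) := by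
        simp only [integral_add Integrable.of_finite Integrable.of_finite, integral_const,
          integral_const_mul, integral_finsetSum _ fun _ _ => Integrable.of_finite, probReal_univ,
          one_smul]
    _ ≤ _ := by
        have hS : 0 ≤ ∑ v, cCoeff d Q v
            * ∫ X, |nbrAvg G (fun w => b2r (X w)) v - nbrAvg G x v| ∂(law G f g x0 t) :=
          sum_nonneg fun v _ => mul_nonneg (sum_nonneg fun _ _ => abs_nonneg _)
            (integral_nonneg fun _ => abs_nonneg _)
        have h2d : (1 : ℝ) ≤ 2 ^ d := one_le_pow₀ one_le_two
        have hN : 0 ≤ polyNorm2 d Q := Real.sqrt_nonneg _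
        nlinarith [mul_nonneg hM hS]

/-- **Lemma 3.1**: one-step bound for a `d`-homogeneous polynomial observable. -/
theorem polynomial_one_step_bound
    {V : Type} [Fintype V] [DecidableEq V]
    (G : SimpleGraph V) [DecidableRel G.Adj]
    (hdeg : ∀ v : V, 0 < G.degree v)
    (f g : ℝ → ℝ) (M : ℝ)
    (hf01 : ∀ a ∈ Set.Icc (0:ℝ) 1, f a ∈ Set.Icc (0:ℝ) 1)
    (hg01 : ∀ a ∈ Set.Icc (0:ℝ) 1, g a ∈ Set.Icc (0:ℝ) 1)
    (hfLip : ∀ a ∈ Set.Icc (0:ℝ) 1, ∀ b ∈ Set.Icc (0:ℝ) 1, |f a - f b| ≤ M * |a - b|)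
    (hgLip : ∀ a ∈ Set.Icc (0:ℝ) 1, ∀ b ∈ Set.Icc (0:ℝ) 1, |g a - g b| ≤ M * |a - b|)
    (x0 : V → Bool) (d : ℕ) (hd : 1 ≤ d) (Q : Finset V → ℝ) (t : ℕ) :
    ∫ y, |polyVal d Q (fun w => b2r (y w))
          - polyVal d Q (det G f g (fun w => b2r (x0 w)) (t + 1))| ∂ (law G f g x0 (t + 1))
      ≤ 2 * polyNorm2 d Q
        + (∑ d' ∈ Finset.Icc 1 d,
            ∫ y, |polyVal d' (derivedCoeff G f g d Q (det G f g (fun w => b2r (x0 w)) t))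
                    (fun w => b2r (y w))
                  - polyVal d' (derivedCoeff G f g d Q (det G f g (fun w => b2r (x0 w)) t))
                    (det G f g (fun w => b2r (x0 w)) t)| ∂ (law G f g x0 t))
        + 2 ^ d * M * ∑ v, cCoeff d Q v *
            ∫ y, |nbrAvg G (fun w => b2r (y w)) v
                  - nbrAvg G (det G f g (fun w => b2r (x0 w)) t) v| ∂ (law G f g x0 t) :=
  polynomial_one_step_bound_general G f g M hf01 hg01 hfLip hgLip x0 d Q t

end
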